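/- Let F be an algebraically closed field of characteristic zero, μ ∈ F, λ a positive integer. If the equation x·a' + (x + μ − λ)·a + λ·x^λ = 0 has a solution a ∈ F(x), then μ is a natural number. -/

import Mathlib

/-!
Write `a = p / q` in lowest terms with `q` monic. Clearing denominators shows that `q` divides
`X * p * q'`, hence `X * q'`; since `X * q' - (deg q) * q` has degree `< deg q`, this forces the Euler
equation `X * q' = (deg q) * q`, so `q = X ^ m`. Then `p` satisfies
`X * p' + (X + μ - λ - m) * p = -λ * X ^ (λ + m)`, whose `k`-th coefficient reads
`(k + μ - λ - m) * p_k + p_(k-1)`. The top coefficient forces `deg p + 1 = λ + m`, and unless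
`k + μ = λ + m` for some `k ≤ deg p`, the vanishing lower coefficients kill `p` inductively.
-/

open Polynomial

namespace Polynomial

theorem coeff_X_mul_derivative {R : Type*} [CommSemiring R] (p : R[X]) (k : ℕ) :
    (X * derivative p).coeff k = k * p.coeff k := by
  cases k with
  | zero => simp
  | succ k => rw [coeff_X_mul, coeff_derivative]; push_cast; ring

theorem X_mul_derivative_X_pow {R : Type*} [CommSemiring R] (n : ℕ) :
    X * derivative (X ^ n : R[X]) = (n : R[X]) * X ^ n := by
  ext k
  rw [coeff_X_mul_derivative, coeff_natCast_mul, coeff_X_pow]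
  split_ifs with h <;> simp [h]

theorem eq_X_pow_of_dvd_X_mul_derivative {K : Type*} [Field K] [CharZero K] {q : K[X]}
    (hq : q.Monic) (h : q ∣ X * derivative q) : q = X ^ q.natDegree := by
  set n := q.natDegree
  have euler : X * derivative q = (n : K[X]) * q := by
    rw [← sub_eq_zero]
    refine eq_zero_of_dvd_of_degree_lt (dvd_sub h (dvd_mul_left q _)) ?_
    rw [degree_eq_natDegree hq.ne_zero, degree_lt_iff_coeff_zero]
    intro k hk
    rw [coeff_sub, coeff_X_mul_derivative, coeff_natCast_mul]
    rcases hk.eq_or_lt with rfl | hlt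
    · ring
    · rw [coeff_eq_zero_of_natDegree_lt hlt]; ring
  ext k
  have hk := congrArg (coeff · k) euler
  simp only [coeff_X_mul_derivative, coeff_natCast_mul] at hk
  rw [coeff_X_pow]
  split_ifs with hkn
  · rw [hkn]; exact hq.coeff_natDegree
  · have : ((k : K) - n) * q.coeff k = 0 := by linear_combination hk
    exact (mul_eq_zero.mp this).resolve_left (sub_ne_zero.mpr (Nat.cast_injective.ne hkn))

theorem exists_lt_natCast_add_eq_zero_of_eq_C_mul_X_pow {R : Type*} [CommRing R]
    [NoZeroDivisors R] {ν c : R} {p : R[X]} {N : ℕ} (hp : p ≠ 0) (h : X * derivative p + (X + C ν) * p = C c * X ^ N) :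
    ∃ k < N, (k : R) + ν = 0 := by
  have coeff_zero_eq : ν * p.coeff 0 = if 0 = N then c else 0 := by
    simpa [coeff_X_mul_derivative, add_mul, coeff_C_mul, coeff_X_pow] using congrArg (coeff · 0) h
  have coeff_succ_eq : ∀ k, ((k + 1 : ℕ) + ν) * p.coeff (k + 1) + p.coeff k
      = if k + 1 = N then c else 0 := by
    intro k
    have := congrArg (coeff · (k + 1)) h
    rw [coeff_add, coeff_X_mul_derivative] at this
    simp only [add_mul, coeff_add, coeff_X_mul, coeff_C_mul, coeff_X_pow, mul_ite, mul_one,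
      mul_zero] at this
    linear_combination this
  set n := p.natDegree
  have hpn : p.coeff n ≠ 0 := leadingCoeff_ne_zero.mpr hp
  have hN : N = n + 1 := by
    by_contra hne
    have := coeff_succ_eq n
    rw [coeff_eq_zero_of_natDegree_lt n.lt_succ_self, if_neg (Ne.symm hne)] at this
    exact hpn (by linear_combination this)
  by_contra! hν
  have vanish : ∀ k ≤ n, p.coeff k = 0 := by
    intro k
    induction k with
    | zero =>
      intro _
      rw [if_neg (by omega)] at coeff_zero_eq
      exact (mul_eq_zero.mp coeff_zero_eq).resolve_left (by simpa using hν 0 (by omega))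
    | succ k ih =>
      intro hk
      have := coeff_succ_eq k
      rw [ih (by omega), if_neg (by omega), add_zero] at this
      exact (mul_eq_zero.mp this).resolve_left (hν (k + 1) (by omega))
  exact hpn (vanish n le_rfl)

end Polynomial

namespace RatFunc

variable {K : Type*} [Field K] {d : Derivation K (RatFunc K) (RatFunc K)}

theorem derivation_algebraMap (hd : d X = 1) (p : K[X]) :
    d (algebraMap K[X] (RatFunc K) p) = algebraMap K[X] (RatFunc K) (derivative p) := by
  have h : d.compAlgebraMap K[X] = Polynomial.mkDerivation K (1 : RatFunc K) :=
    Polynomial.derivation_ext (by simp [Derivation.compAlgebraMap_apply, algebraMap_X, hd])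
  simpa [Derivation.compAlgebraMap_apply, mkDerivation_apply, Algebra.smul_def] using
    DFunLike.congr_fun h p

theorem mul_algebraMap_denom (a : RatFunc K) :
    a * algebraMap K[X] (RatFunc K) a.denom = algebraMap K[X] (RatFunc K) a.num :=
  ((div_eq_iff (algebraMap_ne_zero a.denom_ne_zero)).mp (num_div_denom a)).symm

theorem algebraMap_denom_sq_mul_derivation (hd : d X = 1) (a : RatFunc K) :
    algebraMap K[X] (RatFunc K) a.denom ^ 2 * d a =
      algebraMap K[X] (RatFunc K) (derivative a.num * a.denom - a.num * derivative a.denom) := by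
  have hda := congrArg d (mul_algebraMap_denom a)
  rw [d.leibniz, smul_eq_mul, smul_eq_mul, derivation_algebraMap hd, derivation_algebraMap hd]
    at hda
  simp only [map_sub, map_mul]
  linear_combination algebraMap K[X] (RatFunc K) a.denom * hda
    - algebraMap K[X] (RatFunc K) (derivative a.denom) * mul_algebraMap_denom a

end RatFunc

theorem rational_solution_forces_mu_nat_general
    (F : Type*) [Field F] [CharZero F]
    (d : Derivation F (RatFunc F) (RatFunc F)) (hd : d RatFunc.X = 1)
    (μ : F) (l : ℕ) (hl : 0 < l)
    (hsol : ∃ a : RatFunc F,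
      RatFunc.X * d a + (RatFunc.X + RatFunc.C μ - (l : RatFunc F)) * a
        + (l : RatFunc F) * RatFunc.X ^ l = 0) :
    ∃ n : ℕ, (n : F) = μ := by
  obtain ⟨a, ha⟩ := hsol
  set p := a.num
  set q := a.denom
  set m := q.natDegree
  have hp : p ≠ 0 := RatFunc.num_ne_zero fun h0 => by
    subst h0
    simp [hl.ne', RatFunc.X_ne_zero] at ha
  have cleared : X * (derivative p * q - p * derivative q) + (X + C μ - (l : F[X])) * p * q
      + (l : F[X]) * X ^ l * q ^ 2 = 0 := by
    apply RatFunc.algebraMap_injective F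
    have hquot := RatFunc.algebraMap_denom_sq_mul_derivation hd a
    have hnum := RatFunc.mul_algebraMap_denom a
    simp only [map_add, map_sub, map_mul, map_pow, map_natCast, map_zero, RatFunc.algebraMap_X,
      RatFunc.algebraMap_C] at hquot ⊢
    linear_combination algebraMap F[X] (RatFunc F) q ^ 2 * ha - RatFunc.X * hquot
      - (RatFunc.X + RatFunc.C μ - (l : RatFunc F)) * algebraMap F[X] (RatFunc F) q * hnum
  have hq : q = X ^ m := by
    refine eq_X_pow_of_dvd_X_mul_derivative (RatFunc.monic_denom a) <|
      (RatFunc.isCoprime_num_denom a).symm.dvd_of_dvd_mul_right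
        ⟨X * derivative p + (X + C μ - (l : F[X])) * p + (l : F[X]) * X ^ l * q, ?_⟩
    linear_combination -cleared
  have hp_ode : X * derivative p + (X + C (μ - l - m)) * p = C (-l : F) * X ^ (l + m) := by
    rw [hq] at cleared
    refine mul_right_cancel₀ (pow_ne_zero m X_ne_zero) ?_
    simp only [C_sub, C_neg, C_eq_natCast]
    linear_combination cleared + p * X_mul_derivative_X_pow (R := F) m
  obtain ⟨k, hk, hμ⟩ := exists_lt_natCast_add_eq_zero_of_eq_C_mul_X_pow hp hp_ode
  exact ⟨l + m - k, by push_cast [hk.le]; linear_combination -hμ⟩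

/-- Over an algebraically closed field `F` of characteristic zero, if
`x a' + (x + μ - λ) a + λ x^λ = 0` has a rational solution (with `λ` a positive
integer), then `μ` is a natural number. -/
theorem rational_solution_forces_mu_nat
    (F : Type*) [Field F] [CharZero F] [IsAlgClosed F]
    (d : Derivation F (RatFunc F) (RatFunc F)) (hd : d RatFunc.X = 1)
    (μ : F) (l : ℕ) (hl : 0 < l)
    (hsol : ∃ a : RatFunc F,
      RatFunc.X * d a + (RatFunc.X + RatFunc.C μ - (l : RatFunc F)) * a
        + (l : RatFunc F) * RatFunc.X ^ l = 0) :
    ∃ n : ℕ, (n : F) = μ :=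
  rational_solution_forces_mu_nat_general F d hd μ l hl hsol
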